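/- arXiv:0811.3848 — 3 statements merged into one kernel-verified Lean document; each statement's English description precedes it below -/
import Mathlib

section
/- Let 𝔦 be a Calkin space. If α ∈ 𝔦 and β ∈ c₀ is eventually zero (β ∈ c₀₀), then α⊗β ∈ 𝔦. -/
open scoped BigOperators

noncomputable section

/-- The space of complex null sequences `c₀`. -/
def c0 : Set (ℕ → ℂ) := {α | Filter.Tendsto α Filter.atTop (nhds 0)}

/-- `rearrSum α n` is the supremum of `∑_{i ∈ F} |α i|` over finite sets `F ⊆ ℕ` with
`|F| = n`; for a null sequence it equals `α*₁ + ⋯ + α*ₙ` where `α*` is the decreasing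
rearrangement of `(|α_n|)`. -/
def rearrSum (α : ℕ → ℂ) (n : ℕ) : ℝ :=
  sSup ((fun F : Finset ℕ => ∑ i ∈ F, ‖α i‖) '' {F | F.card = n})

/-- The decreasing rearrangement of a null sequence, 0-indexed:
`rearr α n = α*_{n+1}`. -/
def rearr (α : ℕ → ℂ) (n : ℕ) : ℝ := rearrSum α (n + 1) - rearrSum α n

/-- A Calkin space: a linear subspace of `c₀` containing every null sequence whose
decreasing rearrangement is dominated termwise by that of one of its members. -/
def IsCalkinSpace (I : Set (ℕ → ℂ)) : Prop :=
  I ⊆ c0 ∧ (0 : ℕ → ℂ) ∈ I ∧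
  (∀ α ∈ I, ∀ β ∈ I, α + β ∈ I) ∧
  (∀ (c : ℂ), ∀ α ∈ I, c • α ∈ I) ∧
  (∀ α ∈ I, ∀ β ∈ c0, (∀ n, rearr β n ≤ rearr α n) → β ∈ I)

/-- `tensorSum α β n` is the supremum of `∑_{(i,j) ∈ F} |α i| |β j|` over finite
`F ⊆ ℕ × ℕ` with `|F| = n`; it equals `(α⊗β)₁ + ⋯ + (α⊗β)ₙ`. -/
def tensorSum (α β : ℕ → ℂ) (n : ℕ) : ℝ :=
  sSup ((fun F : Finset (ℕ × ℕ) => ∑ p ∈ F, ‖α p.1‖ * ‖β p.2‖) '' {F | F.card = n})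

/-- The tensor sequence `α⊗β`: the decreasing rearrangement of the double sequence
`(|α_m β_n|)_{m,n}`, 0-indexed: `tensorSeq α β n = (α⊗β)_{n+1}`. -/
def tensorSeq (α β : ℕ → ℂ) (n : ℕ) : ℝ := tensorSum α β (n + 1) - tensorSum α β n

/-- Embedding of real sequences into complex sequences. -/
def toC (f : ℕ → ℝ) : ℕ → ℂ := fun n => (f n : ℂ)

/-- The tensor product `𝔦⊗𝔧` of two Calkin spaces: the smallest Calkin space
containing `α⊗β` for all `α ∈ 𝔦`, `β ∈ 𝔧`. -/
def calkinTensor (I J : Set (ℕ → ℂ)) : Set (ℕ → ℂ) :=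
  ⋂₀ {K | IsCalkinSpace K ∧ ∀ α ∈ I, ∀ β ∈ J, toC (tensorSeq α β) ∈ K}

/-- A Calkin space `𝔦` is stable if `𝔦⊗𝔦 = 𝔦`. -/
def IsStableCalkin (I : Set (ℕ → ℂ)) : Prop := IsCalkinSpace I ∧ calkinTensor I I = I

/-- The principal Calkin space `⟨α⟩` generated by `α`: the smallest Calkin space
containing `α`. -/
def principalCalkin (α : ℕ → ℂ) : Set (ℕ → ℂ) := ⋂₀ {K | IsCalkinSpace K ∧ α ∈ K}

/-- `Kw ω α n = #{m : ω^{n+1} < α m ≤ ω^n}` (the sequence `α` being 0-indexed). -/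
def Kw (ω : ℝ) (α : ℕ → ℝ) (n : ℕ) : ℕ :=
  Set.ncard {m : ℕ | ω ^ (n + 1) < α m ∧ α m ≤ ω ^ n}

/-- `K̃ₙ = Σ_{i=0}^n Kᵢ`. -/
def Ktil (ω : ℝ) (α : ℕ → ℝ) (n : ℕ) : ℕ := ∑ i ∈ Finset.range (n + 1), Kw ω α i

/-- `Mₙ = Σ_{i+j=n} Kᵢ Kⱼ`. -/
def Mw (ω : ℝ) (α : ℕ → ℝ) (n : ℕ) : ℕ :=
  ∑ i ∈ Finset.range (n + 1), Kw ω α i * Kw ω α (n - i)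

/-- `M̃ₙ = Σ_{i=0}^n Mᵢ`. -/
def Mtil (ω : ℝ) (α : ℕ → ℝ) (n : ℕ) : ℕ := ∑ i ∈ Finset.range (n + 1), Mw ω α i

/-!
Choose `N > 0` with `β j = 0` for `j ≥ N`. Listing the entries `α_m β_j` (`j < N`) row by row
gives a sequence `γ` whose partial sums of largest terms are those of `α⊗β`, so `α⊗β` is the
decreasing rearrangement of `γ`. Moreover `γ` is the sum of the `N` sequences obtained by
spreading `β_j α` out along the residue class `j mod N`; each of these has the same
rearrangement as `β_j α ∈ 𝔦`, so lies in `𝔦`, hence so do `γ` and its rearrangement.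
-/

open Filter Finset Function Topology

section CardSup

variable {ι κ : Type*} {f : ι → ℝ} {n : ℕ}

def cardSup (f : ι → ℝ) (n : ℕ) : ℝ :=
  sSup ((fun F : Finset ι => ∑ i ∈ F, f i) '' {F | #F = n})

lemma bddAbove_sums_card_eq (hf : BddAbove (Set.range f)) (n : ℕ) :
    BddAbove ((fun F : Finset ι => ∑ i ∈ F, f i) '' {F | #F = n}) := by
  obtain ⟨C, hC⟩ := hf
  refine ⟨n * C, ?_⟩
  rintro _ ⟨F, hF, rfl⟩
  calc ∑ i ∈ F, f i ≤ ∑ _i ∈ F, C := sum_le_sum fun i _ => hC ⟨i, rfl⟩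
    _ = n * C := by rw [sum_const, nsmul_eq_mul, show #F = n from hF]

lemma sum_le_cardSup (hf : BddAbove (Set.range f)) {F : Finset ι} (hF : #F = n) :
    ∑ i ∈ F, f i ≤ cardSup f n :=
  le_csSup (bddAbove_sums_card_eq hf n) ⟨F, hF, rfl⟩

lemma cardSup_le [Infinite ι] {x : ℝ} (h : ∀ F : Finset ι, #F = n → ∑ i ∈ F, f i ≤ x) :
    cardSup f n ≤ x := by
  obtain ⟨F₀, hF₀⟩ := Infinite.exists_subset_card_eq ι n
  exact csSup_le ⟨_, F₀, hF₀, rfl⟩ (by rintro _ ⟨F, hF, rfl⟩; exact h F hF)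

@[simp]
lemma cardSup_zero (f : ι → ℝ) : cardSup f 0 = 0 := by
  have : (fun F : Finset ι => ∑ i ∈ F, f i) '' {F | #F = 0} = {0} := by
    simp [card_eq_zero]
  rw [cardSup, this, csSup_singleton]

lemma cardSup_le_cardSup_succ [Infinite ι] (hf₀ : 0 ≤ f) (hf : BddAbove (Set.range f))
    (n : ℕ) : cardSup f n ≤ cardSup f (n + 1) :=
  cardSup_le fun F hF => by
    obtain ⟨G, hFG, hG⟩ := Infinite.exists_superset_card_eq F (n + 1) (by omega)
    exact (sum_le_sum_of_subset_of_nonneg hFG fun i _ _ => hf₀ i).trans (sum_le_cardSup hf hG)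

/-- Move one element of `F \ G` from `F` to `G`. -/
lemma sum_add_sum_le_cardSup [DecidableEq ι] (hf : BddAbove (Set.range f)) {F G : Finset ι}
    (hF : #F = n + 2) (hG : #G = n) :
    ∑ i ∈ F, f i + ∑ i ∈ G, f i ≤ 2 * cardSup f (n + 1) := by
  obtain ⟨x, hxF, hxG⟩ := exists_mem_notMem_of_card_lt_card (s := G) (t := F) (by omega)
  have hF' : #(F.erase x) = n + 1 := by rw [card_erase_of_mem hxF, hF]; rfl
  have hG' : #(insert x G) = n + 1 := by rw [card_insert_of_notMem hxG, hG]
  rw [← sum_erase_add F f hxF, two_mul]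
  have := sum_insert (f := f) hxG
  linarith [sum_le_cardSup hf hF', sum_le_cardSup hf hG']

lemma cardSup_add_cardSup_le [Infinite ι] (hf : BddAbove (Set.range f)) (n : ℕ) :
    cardSup f (n + 2) + cardSup f n ≤ 2 * cardSup f (n + 1) := by
  classical
  suffices cardSup f (n + 2) ≤ 2 * cardSup f (n + 1) - cardSup f n by linarith
  refine cardSup_le fun F hF => ?_
  suffices cardSup f n ≤ 2 * cardSup f (n + 1) - ∑ i ∈ F, f i by linarith
  exact cardSup_le fun G hG => by linarith [sum_add_sum_le_cardSup hf hF hG]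

section Embedding

variable [Infinite ι] {g : κ → ℝ} {e : ι → κ}

lemma cardSup_le_cardSup_of_injective (hg : BddAbove (Set.range g)) (he : Injective e)
    (hge : ∀ i, g (e i) = f i) : cardSup f n ≤ cardSup g n :=
  cardSup_le fun F hF => by
    classical
    have hsum : ∑ i ∈ F, f i = ∑ k ∈ F.image e, g k := by
      rw [sum_image he.injOn]
      exact sum_congr rfl fun i _ => (hge i).symm
    rw [hsum]
    exact sum_le_cardSup hg (by rw [card_image_of_injective F he, hF])

lemma cardSup_le_cardSup_of_eq_zero_off_range [Infinite κ] (hf₀ : 0 ≤ f)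
    (hf : BddAbove (Set.range f)) (he : Injective e) (hge : ∀ i, g (e i) = f i)
    (hg₀ : ∀ k ∉ Set.range e, g k = 0) : cardSup g n ≤ cardSup f n :=
  cardSup_le fun G hG => by
    set F₀ := G.preimage e he.injOn
    have hsum : ∑ k ∈ G, g k = ∑ i ∈ F₀, f i := by
      rw [← sum_preimage e G he.injOn g fun k _ hk => hg₀ k hk]
      exact sum_congr rfl fun i _ => hge i
    have hcard : #F₀ ≤ n := by
      classical
      rw [← hG, ← card_image_of_injective F₀ he]
      exact card_le_card fun k hk => by
        obtain ⟨i, hi, rfl⟩ := mem_image.mp hk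
        exact mem_preimage.mp hi
    obtain ⟨F, hF₀F, hF⟩ := Infinite.exists_superset_card_eq F₀ n hcard
    rw [hsum]
    exact (sum_le_sum_of_subset_of_nonneg hF₀F fun i _ _ => hf₀ i).trans (sum_le_cardSup hf hF)

lemma cardSup_eq_of_eq_zero_off_range [Infinite κ] (hf₀ : 0 ≤ f)
    (hf : BddAbove (Set.range f)) (he : Injective e) (hge : ∀ i, g (e i) = f i)
    (hg₀ : ∀ k ∉ Set.range e, g k = 0) (n : ℕ) : cardSup g n = cardSup f n := by
  have hg : BddAbove (Set.range g) := by
    obtain ⟨C, hC⟩ := hf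
    refine ⟨max C 0, ?_⟩
    rintro _ ⟨k, rfl⟩
    by_cases hk : k ∈ Set.range e
    · obtain ⟨i, rfl⟩ := hk
      exact (hge i ▸ hC ⟨i, rfl⟩).trans (le_max_left _ _)
    · exact (hg₀ k hk).symm ▸ le_max_right _ _
  exact le_antisymm (cardSup_le_cardSup_of_eq_zero_off_range hf₀ hf he hge hg₀)
    (cardSup_le_cardSup_of_injective hg he hge)

end Embedding

lemma sum_le_sum_range_card_of_antitone {t : ℕ → ℝ} (ht : Antitone t) (F : Finset ℕ) :
    ∑ i ∈ F, t i ≤ ∑ i ∈ range #F, t i := by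
  induction F using Finset.induction_on_max with
  | empty => simp
  | insert a s ha ih =>
    have has : a ∉ s := fun h => lt_irrefl a (ha a h)
    have hs : #s ≤ a := by simpa using card_le_card fun x hx => mem_range.mpr (ha x hx)
    rw [sum_insert has, card_insert_of_notMem has, sum_range_succ]
    linarith [ht hs]

lemma cardSup_eq_sum_range_of_antitone {t : ℕ → ℝ} (ht : Antitone t) (n : ℕ) :
    cardSup t n = ∑ i ∈ range n, t i := by
  have hbdd : BddAbove (Set.range t) := ⟨t 0, by rintro _ ⟨i, rfl⟩; exact ht (Nat.zero_le i)⟩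
  refine le_antisymm (cardSup_le fun F hF => ?_) (sum_le_cardSup hbdd (card_range n))
  exact hF ▸ sum_le_sum_range_card_of_antitone ht F

lemma cardSup_succ_le_add {f : ℕ → ℝ} (hf : BddAbove (Set.range f)) {ε : ℝ}
    (hε : ∀ i, n ≤ i → f i ≤ ε) : cardSup f (n + 1) ≤ cardSup f n + ε :=
  cardSup_le fun F hF => by
    obtain ⟨i, hiF, hi⟩ : ∃ i ∈ F, i ∉ range n :=
      exists_mem_notMem_of_card_lt_card (by rw [hF, card_range]; omega)
    have hF' : #(F.erase i) = n := by rw [card_erase_of_mem hiF, hF]; rfl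
    rw [← sum_erase_add F f hiF]
    exact add_le_add (sum_le_cardSup hf hF') (hε i (by simpa using hi))

end CardSup

section Rearrangement

variable {α : ℕ → ℂ}

lemma bddAbove_range_norm_of_mem_c0 (hα : α ∈ c0) : BddAbove (Set.range fun i => ‖α i‖) :=
  (tendsto_zero_iff_norm_tendsto_zero.mp hα).bddAbove_range

lemma rearrSum_eq_cardSup (α : ℕ → ℂ) : rearrSum α = cardSup fun i => ‖α i‖ := rfl

lemma rearr_nonneg (hα : BddAbove (Set.range fun i => ‖α i‖)) (n : ℕ) : 0 ≤ rearr α n :=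
  sub_nonneg.mpr (cardSup_le_cardSup_succ (fun i => norm_nonneg (α i)) hα n)

lemma rearr_antitone (hα : BddAbove (Set.range fun i => ‖α i‖)) : Antitone (rearr α) :=
  antitone_nat_of_succ_le fun n => by
    have := cardSup_add_cardSup_le hα n
    simp only [rearr, rearrSum_eq_cardSup]
    linarith

lemma sum_range_rearr (α : ℕ → ℂ) (n : ℕ) : ∑ i ∈ range n, rearr α i = rearrSum α n := by
  simp only [rearr, rearrSum_eq_cardSup, sum_range_sub (cardSup fun i => ‖α i‖), cardSup_zero,
    sub_zero]

lemma rearrSum_toC_rearr (hα : BddAbove (Set.range fun i => ‖α i‖)) :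
    rearrSum (toC (rearr α)) = rearrSum α := by
  have hnorm : (fun i => ‖toC (rearr α) i‖) = rearr α :=
    funext fun i => by simp [toC, abs_of_nonneg (rearr_nonneg hα i)]
  ext n
  rw [rearrSum_eq_cardSup, hnorm, cardSup_eq_sum_range_of_antitone (rearr_antitone hα),
    sum_range_rearr]

lemma tendsto_rearr_atTop_zero (hα : α ∈ c0) : Tendsto (rearr α) atTop (𝓝 0) := by
  have hbdd := bddAbove_range_norm_of_mem_c0 hα
  refine tendsto_order.2 ⟨fun a ha => .of_forall fun n => ha.trans_le (rearr_nonneg hbdd n),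
    fun ε hε => ?_⟩
  obtain ⟨M, hM⟩ := eventually_atTop.mp
    ((tendsto_zero_iff_norm_tendsto_zero.mp hα).eventually (gt_mem_nhds (half_pos hε)))
  refine eventually_atTop.mpr ⟨M, fun n hn => ?_⟩
  have := cardSup_succ_le_add hbdd fun i hi => (hM i (hn.trans hi)).le
  rw [rearr, rearrSum_eq_cardSup]
  linarith

lemma toC_rearr_mem_c0 (hα : α ∈ c0) : toC (rearr α) ∈ c0 := by
  have := (Complex.continuous_ofReal.tendsto 0).comp (tendsto_rearr_atTop_zero hα)
  rw [Complex.ofReal_zero] at this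
  exact this

end Rearrangement

/-- `spread N j α` places `α m` at position `N * m + j` and `0` elsewhere. -/
def spread (N j : ℕ) (α : ℕ → ℂ) : ℕ → ℂ := fun m => if m % N = j then α (m / N) else 0

lemma rearrSum_spread {N j : ℕ} (hj : j < N) {α : ℕ → ℂ} (hα : α ∈ c0) :
    rearrSum (spread N j α) = rearrSum α := by
  have hN : 0 < N := by omega
  ext n
  refine cardSup_eq_of_eq_zero_off_range (fun i => norm_nonneg (α i))
    (bddAbove_range_norm_of_mem_c0 hα) (e := fun m => N * m + j) ?_ (fun m => ?_) ?_ n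
  · exact fun a b h => Nat.eq_of_mul_eq_mul_left hN (Nat.add_right_cancel h)
  · simp [spread, Nat.mod_eq_of_lt hj, Nat.mul_add_div hN, Nat.div_eq_of_lt hj]
  · intro k hk
    have : k % N ≠ j := fun h => hk ⟨k / N, by simp only [← h, Nat.div_add_mod]⟩
    simp [spread, this]

lemma spread_mem_c0 {N j : ℕ} (hj : j < N) {α : ℕ → ℂ} (hα : α ∈ c0) : spread N j α ∈ c0 := by
  have hdiv : Tendsto (fun m => ‖α (m / N)‖) atTop (𝓝 0) :=
    (tendsto_zero_iff_norm_tendsto_zero.mp hα).comp (Nat.tendsto_div_const_atTop (by omega))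
  refine tendsto_zero_iff_norm_tendsto_zero.mpr <|
    squeeze_zero (fun m => norm_nonneg _) (fun m => ?_) hdiv
  unfold spread
  split <;> simp

/-- The entries `α m * β j` with `j < N` of the double sequence, listed row by row. -/
def tensorTrunc (N : ℕ) (α β : ℕ → ℂ) : ℕ → ℂ := fun m => α (m / N) * β (m % N)

lemma sum_spread_smul_eq_tensorTrunc {N : ℕ} (hN : 0 < N) (α β : ℕ → ℂ) :
    ∑ j ∈ range N, spread N j (β j • α) = tensorTrunc N α β := by
  ext m
  simp [spread, tensorTrunc, Finset.sum_apply, Nat.mod_lt m hN, mul_comm]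

lemma tensorSum_eq_rearrSum_tensorTrunc {N : ℕ} (hN : 0 < N) {α β : ℕ → ℂ}
    (hβ : ∀ j, N ≤ j → β j = 0) (hγ : tensorTrunc N α β ∈ c0) :
    tensorSum α β = rearrSum (tensorTrunc N α β) := by
  ext n
  refine cardSup_eq_of_eq_zero_off_range (fun i => norm_nonneg _)
    (bddAbove_range_norm_of_mem_c0 hγ) (e := fun m => (m / N, m % N)) ?_
    (fun m => (norm_mul _ _).symm) ?_ n
  · intro a b h
    simp only [Prod.mk.injEq] at h
    rw [← Nat.div_add_mod a N, ← Nat.div_add_mod b N, h.1, h.2]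
  · rintro ⟨i, j⟩ hij
    have hj : N ≤ j := by
      by_contra! hj
      exact hij ⟨N * i + j, by simp [Nat.mul_add_div hN, Nat.div_eq_of_lt hj, Nat.mod_eq_of_lt hj]⟩
    simp [hβ j hj]

namespace IsCalkinSpace

variable {I : Set (ℕ → ℂ)}

lemma sum_mem (hI : IsCalkinSpace I) {ι : Type*} {s : Finset ι} {α : ι → ℕ → ℂ}
    (hα : ∀ j ∈ s, α j ∈ I) : ∑ j ∈ s, α j ∈ I :=
  Finset.sum_induction α (· ∈ I) (fun a b ha hb => hI.2.2.1 a ha b hb) hI.2.1 hα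

lemma mem_of_rearrSum_eq (hI : IsCalkinSpace I) {α β : ℕ → ℂ} (hα : α ∈ I) (hβ : β ∈ c0)
    (h : rearrSum β = rearrSum α) : β ∈ I :=
  hI.2.2.2.2 α hα β hβ fun n => by simp only [rearr, h, le_refl]

lemma toC_rearr_mem (hI : IsCalkinSpace I) {α : ℕ → ℂ} (hα : α ∈ I) : toC (rearr α) ∈ I :=
  hI.mem_of_rearrSum_eq hα (toC_rearr_mem_c0 (hI.1 hα))
    (rearrSum_toC_rearr (bddAbove_range_norm_of_mem_c0 (hI.1 hα)))

lemma spread_mem (hI : IsCalkinSpace I) {N j : ℕ} (hj : j < N) {α : ℕ → ℂ} (hα : α ∈ I) :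
    spread N j α ∈ I :=
  hI.mem_of_rearrSum_eq hα (spread_mem_c0 hj (hI.1 hα)) (rearrSum_spread hj (hI.1 hα))

end IsCalkinSpace

theorem tensor_mem_of_eventually_zero_general (I : Set (ℕ → ℂ)) (hI : IsCalkinSpace I)
    (α β : ℕ → ℂ) (hα : α ∈ I)
    (hβ00 : ∃ N : ℕ, ∀ n, N ≤ n → β n = 0) :
    toC (tensorSeq α β) ∈ I := by
  obtain ⟨N, hN⟩ := hβ00
  have hγ : tensorTrunc (N + 1) α β ∈ I := by
    rw [← sum_spread_smul_eq_tensorTrunc N.succ_pos]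
    exact hI.sum_mem fun j hj =>
      hI.spread_mem (mem_range.mp hj) (hI.2.2.2.1 (β j) α hα)
  have hseq : tensorSeq α β = rearr (tensorTrunc (N + 1) α β) := by
    ext n
    rw [tensorSeq, rearr,
      tensorSum_eq_rearrSum_tensorTrunc N.succ_pos (fun j hj => hN j (by omega)) (hI.1 hγ)]
  rw [hseq]
  exact hI.toC_rearr_mem hγ

/-- Let `𝔦` be a Calkin space.  If `α ∈ 𝔦` and `β ∈ c₀` is eventually
zero, then `α⊗β ∈ 𝔦`. -/
theorem tensor_mem_of_eventually_zero (I : Set (ℕ → ℂ)) (hI : IsCalkinSpace I)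
    (α β : ℕ → ℂ) (hα : α ∈ I) (hβ : β ∈ c0)
    (hβ00 : ∃ N : ℕ, ∀ n, N ≤ n → β n = 0) :
    toC (tensorSeq α β) ∈ I :=
  tensor_mem_of_eventually_zero_general I hI α β hα hβ00
end
end

section
/- Let ω ∈ (0,1) and let α, β ∈ c₀ be nonincreasing sequences of nonnegative reals with α₁ ≤ 1 and β₁ ≤ 1. Then α ≲ β if and only if there exists a positive integer r such that K̃ₙ^{(ω)}(α) ≤ K̃_{n+r}^{(ω)}(β) for every integer n ≥ 0. -/
open scoped BigOperators

noncomputable section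

/-! Since `α ≤ 1`, the levels `(ω^{i+1}, ω^i]`, `i ≤ n`, partition `(ω^{n+1}, 1]`, so `K̃ₙ(α)` is
the number of `m` with `α m > ω^{n+1}`, and for antitone `α` these `m` form an initial segment
of `ℕ`. Multiplying by a constant `C ≤ ω^{-r}` moves a term down by at most `r` levels, which
turns `α ≲ β` into `K̃ₙ(α) ≤ K̃_{n+r}(β)` and back. -/

open Filter Topology

theorem finite_setOf_lt_of_tendsto_zero {α : ℕ → ℝ} (hα : Tendsto α atTop (𝓝 0))
    {t : ℝ} (ht : 0 < t) : {m | t < α m}.Finite := by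
  have hev : ∀ᶠ m in cofinite, α m < t := Nat.cofinite_eq_atTop ▸ hα.eventually_lt_const ht
  exact (eventually_cofinite.1 hev).subset fun m hm => not_lt.2 hm.le

theorem Antitone.lt_ncard_setOf_lt_iff {γ : Type*} [LinearOrder γ] {α : ℕ → γ}
    (hα : Antitone α) {t : γ} (hfin : {k | t < α k}.Finite) (m : ℕ) :
    m < {k | t < α k}.ncard ↔ t < α m := by
  constructor
  · intro hm
    by_contra! hαm
    have hsub : {k | t < α k} ⊆ ↑(Finset.range m) := fun k hk => by
      rw [Finset.coe_range, Set.mem_Iio]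
      by_contra! hkm
      exact ((hα hkm).trans hαm).not_gt hk
    have := Set.ncard_le_ncard hsub (Finset.range m).finite_toSet
    rw [Set.ncard_coe_finset, Finset.card_range] at this
    omega
  · intro hαm
    have hsub : ↑(Finset.range (m + 1)) ⊆ {k | t < α k} := fun k hk =>
      hαm.trans_le (hα (Nat.lt_succ_iff.1 (Finset.mem_range.1 hk)))
    have := Set.ncard_le_ncard hsub hfin
    rw [Set.ncard_coe_finset, Finset.card_range] at this
    omega

section Ktil

variable {ω : ℝ} {α β : ℕ → ℝ}

theorem Ktil_eq_ncard (hω : ω ∈ Set.Ioo (0 : ℝ) 1) (hα1 : ∀ m, α m ≤ 1)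
    (hαc : Tendsto α atTop (𝓝 0)) (n : ℕ) :
    Ktil ω α n = {m | ω ^ (n + 1) < α m}.ncard := by
  induction n with
  | zero =>
    simp only [Ktil, Kw, zero_add, Finset.range_one, Finset.sum_singleton, pow_zero, pow_one]
    congr 1
    ext m
    exact ⟨And.left, fun h => ⟨h, hα1 m⟩⟩
  | succ n ih =>
    have hsub : {m | ω ^ (n + 1) < α m} ⊆ {m | ω ^ (n + 2) < α m} := fun m hm =>
      (pow_lt_pow_right_of_lt_one₀ hω.1 hω.2 (Nat.lt_succ_self _)).trans hm
    have hKw : Kw ω α (n + 1) = ({m | ω ^ (n + 2) < α m} \ {m | ω ^ (n + 1) < α m}).ncard := by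
      unfold Kw
      congr 1
      ext m
      simp only [Set.mem_sdiff, Set.mem_ofPred_eq, not_lt]
    rw [Ktil, Finset.sum_range_succ, ← Ktil, ih, hKw, add_comm,
      Set.ncard_sdiff_add_ncard_of_subset hsub
        (finite_setOf_lt_of_tendsto_zero hαc (pow_pos hω.1 _))]

theorem setOf_lt_subset_of_le_mul {C s t : ℝ} (hC : 0 < C) (hαβ : ∀ m, α m ≤ C * β m)
    (hts : C * t ≤ s) : {m | s < α m} ⊆ {m | t < β m} := fun m hm =>
  lt_of_mul_lt_mul_left (hts.trans_lt (hm.trans_le (hαβ m))) hC.le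

theorem exists_Ktil_le_Ktil_add_of_le_mul (hω : ω ∈ Set.Ioo (0 : ℝ) 1)
    (hα1 : ∀ m, α m ≤ 1) (hβ1 : ∀ m, β m ≤ 1)
    (hαc : Tendsto α atTop (𝓝 0)) (hβc : Tendsto β atTop (𝓝 0))
    {C : ℝ} (hC : 0 < C) (hαβ : ∀ m, α m ≤ C * β m) :
    ∃ r, 0 < r ∧ ∀ n, Ktil ω α n ≤ Ktil ω β (n + r) := by
  obtain ⟨N, hN⟩ := exists_pow_lt_of_lt_one (inv_pos.2 hC) hω.2
  have hCω : C * ω ^ (N + 1) ≤ 1 := by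
    have : ω ^ (N + 1) ≤ ω ^ N := pow_le_pow_of_le_one hω.1.le hω.2.le N.le_succ
    calc C * ω ^ (N + 1) ≤ C * C⁻¹ := by gcongr; exact this.trans hN.le
      _ = 1 := mul_inv_cancel₀ hC.ne'
  refine ⟨N + 1, N.succ_pos, fun n => ?_⟩
  have hts : C * ω ^ (n + (N + 1) + 1) ≤ ω ^ (n + 1) := by
    rw [show n + (N + 1) + 1 = (N + 1) + (n + 1) by ring, pow_add, ← mul_assoc]
    exact mul_le_of_le_one_left (pow_pos hω.1 _).le hCω
  rw [Ktil_eq_ncard hω hα1 hαc, Ktil_eq_ncard hω hβ1 hβc]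
  exact Set.ncard_le_ncard (setOf_lt_subset_of_le_mul hC hαβ hts)
    (finite_setOf_lt_of_tendsto_zero hβc (pow_pos hω.1 _))

/-- If `α m` lies in the level `(ω^{n+1}, ω^n]`, then `m` is counted by `K̃ₙ(α) ≤ K̃_{n+r}(β)`;
as `β` is antitone this puts `β m` above `ω^{n+r+1}`, whence `α m ≤ ω^{-(r+1)} β m`. -/
theorem exists_le_mul_of_Ktil_le_Ktil_add (hω : ω ∈ Set.Ioo (0 : ℝ) 1)
    (hαa : Antitone α) (hβa : Antitone β) (hβ0 : ∀ m, 0 ≤ β m)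
    (hα1 : ∀ m, α m ≤ 1) (hβ1 : ∀ m, β m ≤ 1)
    (hαc : Tendsto α atTop (𝓝 0)) (hβc : Tendsto β atTop (𝓝 0))
    {r : ℕ} (hK : ∀ n, Ktil ω α n ≤ Ktil ω β (n + r)) :
    ∃ C : ℝ, 0 < C ∧ ∀ m, α m ≤ C * β m := by
  have hωr : 0 < ω ^ (r + 1) := pow_pos hω.1 _
  refine ⟨(ω ^ (r + 1))⁻¹, inv_pos.2 hωr, fun m => ?_⟩
  rcases le_or_gt (α m) 0 with hαm | hαm
  · exact hαm.trans (mul_nonneg (inv_pos.2 hωr).le (hβ0 m))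
  obtain ⟨n, hlow, hup⟩ := exists_nat_pow_near_of_lt_one hαm (hα1 m) hω.1 hω.2
  have hmα : m < Ktil ω α n := by
    rw [Ktil_eq_ncard hω hα1 hαc,
      hαa.lt_ncard_setOf_lt_iff (finite_setOf_lt_of_tendsto_zero hαc (pow_pos hω.1 _))]
    exact hlow
  have hβm : ω ^ (n + r + 1) < β m := by
    rw [← hβa.lt_ncard_setOf_lt_iff (finite_setOf_lt_of_tendsto_zero hβc (pow_pos hω.1 _)),
      ← Ktil_eq_ncard hω hβ1 hβc]
    exact hmα.trans_le (hK n)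
  rw [inv_mul_eq_div, le_div_iff₀ hωr]
  calc α m * ω ^ (r + 1) ≤ ω ^ n * ω ^ (r + 1) := by gcongr
    _ = ω ^ (n + r + 1) := by rw [← pow_add, add_assoc]
    _ ≤ β m := hβm.le

end Ktil

theorem lesssim_iff_Ktil_general (ω : ℝ) (hω : ω ∈ Set.Ioo (0 : ℝ) 1) (α β : ℕ → ℝ)
    (hαa : Antitone α) (hβa : Antitone β)
    (hβ0 : ∀ n, 0 ≤ β n)
    (hαc : Filter.Tendsto α Filter.atTop (nhds 0))
    (hβc : Filter.Tendsto β Filter.atTop (nhds 0))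
    (hα1 : α 0 ≤ 1) (hβ1 : β 0 ≤ 1) :
    (∃ C : ℝ, 0 < C ∧ ∀ n, α n ≤ C * β n) ↔
      (∃ r : ℕ, 0 < r ∧ ∀ n : ℕ, Ktil ω α n ≤ Ktil ω β (n + r)) := by
  have hα1' : ∀ m, α m ≤ 1 := fun m => (hαa m.zero_le).trans hα1
  have hβ1' : ∀ m, β m ≤ 1 := fun m => (hβa m.zero_le).trans hβ1
  constructor
  · rintro ⟨C, hC, hαβ⟩
    exact exists_Ktil_le_Ktil_add_of_le_mul hω hα1' hβ1' hαc hβc hC hαβ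
  · rintro ⟨r, -, hK⟩
    exact exists_le_mul_of_Ktil_le_Ktil_add hω hαa hβa hβ0 hα1' hβ1' hαc hβc hK

/-- Let `ω ∈ (0,1)` and `α, β` be nonincreasing null sequences of
nonnegative reals with `α₁ ≤ 1` and `β₁ ≤ 1`.  Then `α ≲ β` iff there is a positive
integer `r` with `K̃ₙ^{(ω)}(α) ≤ K̃_{n+r}^{(ω)}(β)` for every `n ≥ 0`. -/
theorem lesssim_iff_Ktil (ω : ℝ) (hω : ω ∈ Set.Ioo (0 : ℝ) 1) (α β : ℕ → ℝ)
    (hαa : Antitone α) (hβa : Antitone β)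
    (hα0 : ∀ n, 0 ≤ α n) (hβ0 : ∀ n, 0 ≤ β n)
    (hαc : Filter.Tendsto α Filter.atTop (nhds 0))
    (hβc : Filter.Tendsto β Filter.atTop (nhds 0))
    (hα1 : α 0 ≤ 1) (hβ1 : β 0 ≤ 1) :
    (∃ C : ℝ, 0 < C ∧ ∀ n, α n ≤ C * β n) ↔
      (∃ r : ℕ, 0 < r ∧ ∀ n : ℕ, Ktil ω α n ≤ Ktil ω β (n + r)) :=
  lesssim_iff_Ktil_general ω hω α β hαa hβa hβ0 hαc hβc hα1 hβ1
end
end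

section
/- Let α ∈ c₀ be a nonincreasing sequence of nonnegative reals with α₁ ≤ 1 and let ω ∈ (0,1). Suppose there is a constant C > 0 such that K_{n+j}^{(ω)}(α) ≥ C · (Σ_{i=0}^n K_i^{(ω)}(α))² for every positive integer j and every integer n ≥ 0. Then the principal Calkin space ⟨α⟩ is stable. -/
open scoped BigOperators

noncomputable section

/-!
Everything is measured through distribution functions `N_β(t) = #{i | t < |β i|}`, since
`β* ≤ γ*` pointwise iff `N_β ≤ N_γ` on `(0, ∞)`. In these terms `⟨α⟩` consists of the null
sequences with `N_β(c t) ≤ k N_α(t)` for some `c > 0` and `k ≥ 1`, i.e. `β* = O(α(n / k))`.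
For the tensor product, `N_{β⊗γ}(c c' t) ≤ N_β(c t) N_γ(c' t) ≤ k k' N_α(t)²`, and the growth
hypothesis yields `N_α(t)² ≤ D N_α(ω² t)`; so `⟨α⟩ ⊗ ⟨α⟩ ⊆ ⟨α⟩`. Conversely `α` is
dominated by a multiple of `α ⊗ α`, whence `⟨α⟩ ⊆ ⟨α⟩ ⊗ ⟨α⟩`.
-/

open Filter Topology

section Rearrangement

variable {ι κ : Type*}

def countGt (f : ι → ℝ) (t : ℝ) : ℕ := {i | t < f i}.ncard

lemma finite_setOf_lt {f : ι → ℝ} (hf : Tendsto f cofinite (𝓝 0)) {t : ℝ} (ht : 0 < t) :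
    {i | t < f i}.Finite :=
  (eventually_cofinite.mp (hf.eventually (gt_mem_nhds ht))).subset fun _ hi => not_lt.mpr hi.le

lemma tendsto_cofinite_of_finite_setOf_lt {f : ι → ℝ} (hf0 : ∀ i, 0 ≤ f i)
    (hf : ∀ t > 0, {i | t < f i}.Finite) : Tendsto f cofinite (𝓝 0) := by
  refine tendsto_order.mpr ⟨fun a ha => .of_forall fun i => ha.trans_le (hf0 i),
    fun a ha => eventually_cofinite.mpr ((hf (a / 2) (by positivity)).subset fun i hi => ?_)⟩
  simp only [Set.mem_ofPred_eq, not_lt] at hi ⊢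
  linarith

lemma countGt_eq_zero {f : ι → ℝ} {t : ℝ} (h : ∀ i, f i ≤ t) : countGt f t = 0 := by
  have : {i | t < f i} = ∅ := Set.eq_empty_of_forall_notMem fun i hi => (h i).not_gt hi
  rw [countGt, this, Set.ncard_empty]

lemma countGt_anti {f : ι → ℝ} (hf : Tendsto f cofinite (𝓝 0)) {s t : ℝ} (hs : 0 < s)
    (hst : s ≤ t) : countGt f t ≤ countGt f s :=
  Set.ncard_le_ncard (fun _ hi => hst.trans_lt hi) (finite_setOf_lt hf hs)

variable {f : ι → ℝ}

lemma exists_max_notMem_finset [Infinite ι] (hf0 : ∀ i, 0 ≤ f i)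
    (hf : Tendsto f cofinite (𝓝 0)) (G : Finset ι) : ∃ j ∉ G, ∀ i ∉ G, f i ≤ f j := by
  by_cases hpos : ∃ i₀ ∉ G, 0 < f i₀
  · obtain ⟨i₀, hi₀G, hi₀⟩ := hpos
    set S := {i | f i₀ / 2 < f i} \ G
    have hS : S.Finite := (finite_setOf_lt hf (by positivity)).sdiff
    obtain ⟨j, ⟨-, hjG⟩, hj⟩ := S.exists_max_image f hS ⟨i₀, by simp [S, hi₀G, hi₀]⟩
    have hi₀j : f i₀ ≤ f j := hj i₀ ⟨half_lt_self hi₀, hi₀G⟩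
    refine ⟨j, hjG, fun i hiG => ?_⟩
    by_cases hi : f i₀ / 2 < f i
    · exact hj i ⟨hi, hiG⟩
    · linarith
  · push Not at hpos
    obtain ⟨j, hj⟩ := Infinite.exists_notMem_finset G
    exact ⟨j, hj, fun i hi => (hpos i hi).trans (hf0 j)⟩

def nextMax [Nonempty ι] (f : ι → ℝ) (G : Finset ι) : ι :=
  Classical.epsilon fun j => j ∉ G ∧ ∀ i ∉ G, f i ≤ f j

open Classical in
def topSet [Nonempty ι] (f : ι → ℝ) : ℕ → Finset ι
  | 0 => ∅
  | n + 1 => insert (nextMax f (topSet f n)) (topSet f n)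

def decRearr [Nonempty ι] (f : ι → ℝ) (n : ℕ) : ℝ := f (nextMax f (topSet f n))

lemma topSet_mono [Nonempty ι] : Monotone (topSet f) := by
  classical
  exact monotone_nat_of_le_succ fun _ => Finset.subset_insert _ _

lemma decRearr_nonneg [Nonempty ι] (hf0 : ∀ i, 0 ≤ f i) (n : ℕ) : 0 ≤ decRearr f n := hf0 _

variable [Infinite ι]

lemma nextMax_spec (hf0 : ∀ i, 0 ≤ f i) (hf : Tendsto f cofinite (𝓝 0)) (G : Finset ι) :
    nextMax f G ∉ G ∧ ∀ i ∉ G, f i ≤ f (nextMax f G) :=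
  Classical.epsilon_spec (exists_max_notMem_finset hf0 hf G)

lemma card_topSet (hf0 : ∀ i, 0 ≤ f i) (hf : Tendsto f cofinite (𝓝 0)) (n : ℕ) :
    (topSet f n).card = n := by
  classical
  induction n with
  | zero => rfl
  | succ n ih => rw [topSet, Finset.card_insert_of_notMem (nextMax_spec hf0 hf _).1, ih]

lemma le_decRearr (hf0 : ∀ i, 0 ≤ f i) (hf : Tendsto f cofinite (𝓝 0)) {n : ℕ} {i : ι}
    (hi : i ∉ topSet f n) : f i ≤ decRearr f n :=
  (nextMax_spec hf0 hf _).2 i hi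

lemma decRearr_antitone (hf0 : ∀ i, 0 ≤ f i) (hf : Tendsto f cofinite (𝓝 0)) :
    Antitone (decRearr f) :=
  antitone_nat_of_succ_le fun n => le_decRearr hf0 hf fun h =>
    (nextMax_spec hf0 hf (topSet f (n + 1))).1 (topSet_mono n.le_succ h)

lemma decRearr_le_of_mem (hf0 : ∀ i, 0 ≤ f i) (hf : Tendsto f cofinite (𝓝 0)) {n : ℕ} {j : ι}
    (hj : j ∈ topSet f (n + 1)) : decRearr f n ≤ f j := by
  classical
  induction n with
  | zero => simp_all [topSet, decRearr]
  | succ n ih =>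
    rw [topSet, Finset.mem_insert] at hj
    rcases hj with rfl | hj
    · rfl
    · exact (decRearr_antitone hf0 hf n.le_succ).trans (ih hj)

lemma sum_topSet (hf0 : ∀ i, 0 ≤ f i) (hf : Tendsto f cofinite (𝓝 0)) (n : ℕ) :
    ∑ i ∈ topSet f n, f i = ∑ m ∈ Finset.range n, decRearr f m := by
  classical
  induction n with
  | zero => rfl
  | succ n ih =>
    rw [topSet, Finset.sum_insert (nextMax_spec hf0 hf _).1, Finset.sum_range_succ, ih, add_comm]
    rfl

/-- Exchanging the elements of `F \ topSet f n` for those of `topSet f n \ F` does not decrease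
the sum, since `decRearr f n` separates the two. -/
lemma sum_le_sum_topSet (hf0 : ∀ i, 0 ≤ f i) (hf : Tendsto f cofinite (𝓝 0)) {F : Finset ι}
    {n : ℕ} (hF : F.card = n) : ∑ i ∈ F, f i ≤ ∑ i ∈ topSet f n, f i := by
  classical
  set G := topSet f n
  have hcard : (F \ G).card = (G \ F).card :=
    Finset.card_sdiff_comm (by rw [hF, card_topSet hf0 hf])
  have hout : ∑ i ∈ F \ G, f i ≤ (F \ G).card • decRearr f n :=
    Finset.sum_le_card_nsmul _ _ _ fun i hi => le_decRearr hf0 hf (Finset.mem_sdiff.mp hi).2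
  have hin : (G \ F).card • decRearr f n ≤ ∑ i ∈ G \ F, f i :=
    Finset.card_nsmul_le_sum _ _ _ fun i hi =>
      decRearr_le_of_mem hf0 hf (topSet_mono n.le_succ (Finset.mem_sdiff.mp hi).1)
  rw [← Finset.sum_inter_add_sum_sdiff F G, ← Finset.sum_inter_add_sum_sdiff G F,
    Finset.inter_comm G F]
  rw [hcard] at hout
  linarith

lemma sSup_sum_card_eq (hf0 : ∀ i, 0 ≤ f i) (hf : Tendsto f cofinite (𝓝 0)) (n : ℕ) :
    sSup ((fun F : Finset ι => ∑ i ∈ F, f i) '' {F | F.card = n}) =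
      ∑ m ∈ Finset.range n, decRearr f m := by
  rw [← sum_topSet hf0 hf n]
  refine IsGreatest.csSup_eq ⟨⟨topSet f n, card_topSet hf0 hf n, rfl⟩, ?_⟩
  rintro _ ⟨F, hF, rfl⟩
  exact sum_le_sum_topSet hf0 hf hF

lemma lt_decRearr_iff (hf0 : ∀ i, 0 ≤ f i) (hf : Tendsto f cofinite (𝓝 0)) {t : ℝ}
    (ht : 0 < t) (n : ℕ) : t < decRearr f n ↔ n < countGt f t := by
  constructor
  · intro h
    have hsub : (topSet f (n + 1) : Set ι) ⊆ {i | t < f i} := fun j hj =>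
      h.trans_le (decRearr_le_of_mem hf0 hf hj)
    have := Set.ncard_le_ncard hsub (finite_setOf_lt hf ht)
    rw [Set.ncard_coe_finset, card_topSet hf0 hf] at this
    exact this
  · intro h
    by_contra hle
    have hsub : {i | t < f i} ⊆ topSet f n := fun i hi => by
      by_contra hmem
      exact not_lt.mpr ((le_decRearr hf0 hf hmem).trans (not_lt.mp hle)) hi
    have := Set.ncard_le_ncard hsub (Finset.finite_toSet _)
    rw [Set.ncard_coe_finset, card_topSet hf0 hf] at this
    exact (this.trans_lt h).false

lemma setOf_lt_decRearr (hf0 : ∀ i, 0 ≤ f i) (hf : Tendsto f cofinite (𝓝 0)) {t : ℝ}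
    (ht : 0 < t) : {n | t < decRearr f n} = Set.Iio (countGt f t) :=
  Set.ext (lt_decRearr_iff hf0 hf ht)

lemma countGt_decRearr (hf0 : ∀ i, 0 ≤ f i) (hf : Tendsto f cofinite (𝓝 0)) {t : ℝ}
    (ht : 0 < t) : countGt (decRearr f) t = countGt f t := by
  rw [countGt, setOf_lt_decRearr hf0 hf ht, Set.ncard_Iio_nat]

lemma tendsto_decRearr (hf0 : ∀ i, 0 ≤ f i) (hf : Tendsto f cofinite (𝓝 0)) :
    Tendsto (decRearr f) atTop (𝓝 0) := by
  rw [← Nat.cofinite_eq_atTop]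
  refine tendsto_cofinite_of_finite_setOf_lt (decRearr_nonneg hf0) fun t ht => ?_
  rw [setOf_lt_decRearr hf0 hf ht]
  exact Set.finite_Iio _

lemma decRearr_le_decRearr_iff {g : κ → ℝ} [Infinite κ] (hf0 : ∀ i, 0 ≤ f i)
    (hf : Tendsto f cofinite (𝓝 0)) (hg0 : ∀ j, 0 ≤ g j) (hg : Tendsto g cofinite (𝓝 0)) :
    (∀ n, decRearr f n ≤ decRearr g n) ↔ ∀ t > 0, countGt f t ≤ countGt g t := by
  constructor
  · intro h t ht
    by_contra! hlt
    have := (lt_decRearr_iff hf0 hf ht _).mpr hlt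
    exact lt_irrefl _ ((lt_decRearr_iff hg0 hg ht _).mp (this.trans_le (h _)))
  · intro h n
    by_contra! hlt
    obtain ⟨t, hgt, htf⟩ := exists_between hlt
    have ht : 0 < t := (decRearr_nonneg hg0 n).trans_lt hgt
    have hn := (lt_decRearr_iff hf0 hf ht n).mp htf
    exact hgt.not_gt ((lt_decRearr_iff hg0 hg ht n).mpr (hn.trans_le (h t ht)))

end Rearrangement

section Products

variable {ι κ : Type*} {a : ι → ℝ} {b : κ → ℝ}

lemma setOf_lt_mul_subset {A B s : ℝ} (ha0 : ∀ i, 0 ≤ a i) (hb0 : ∀ j, 0 ≤ b j)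
    (ha : ∀ i, a i ≤ A) (hb : ∀ j, b j ≤ B) (hs : 0 ≤ s) :
    {p : ι × κ | A * B * s < a p.1 * b p.2} ⊆ {i | A * s < a i} ×ˢ {j | B * s < b j} := by
  rintro ⟨i, j⟩ hp
  simp only [Set.mem_ofPred_eq] at hp
  have hA : 0 ≤ A := (ha0 i).trans (ha i)
  refine ⟨?_, ?_⟩ <;> simp only [Set.mem_ofPred_eq] <;> by_contra! h
  · nlinarith [mul_le_mul h (hb j) (hb0 j) (by positivity)]
  · nlinarith [mul_le_mul (ha i) h (hb0 j) hA]

lemma countGt_mul_le {A B s : ℝ} (ha0 : ∀ i, 0 ≤ a i) (hb0 : ∀ j, 0 ≤ b j)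
    (ha : ∀ i, a i ≤ A) (hb : ∀ j, b j ≤ B) (hs : 0 ≤ s)
    (ha_fin : {i | A * s < a i}.Finite) (hb_fin : {j | B * s < b j}.Finite) :
    countGt (fun p : ι × κ => a p.1 * b p.2) (A * B * s) ≤
      countGt a (A * s) * countGt b (B * s) :=
  (Set.ncard_le_ncard (setOf_lt_mul_subset ha0 hb0 ha hb hs) (ha_fin.prod hb_fin)).trans_eq
    Set.ncard_prod

lemma tendsto_cofinite_mul (ha0 : ∀ i, 0 ≤ a i) (hb0 : ∀ j, 0 ≤ b j)
    (ha : Tendsto a cofinite (𝓝 0)) (hb : Tendsto b cofinite (𝓝 0)) :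
    Tendsto (fun p : ι × κ => a p.1 * b p.2) cofinite (𝓝 0) := by
  obtain ⟨A, hA⟩ := ha.bddAbove_range_of_cofinite
  obtain ⟨B, hB⟩ := hb.bddAbove_range_of_cofinite
  have hA' : ∀ i, a i ≤ max A 1 := fun i => (hA ⟨i, rfl⟩).trans (le_max_left _ _)
  have hB' : ∀ j, b j ≤ max B 1 := fun j => (hB ⟨j, rfl⟩).trans (le_max_left _ _)
  have hpos : 0 < max A 1 * max B 1 := by positivity
  refine tendsto_cofinite_of_finite_setOf_lt (fun p => mul_nonneg (ha0 _) (hb0 _)) fun t ht => ?_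
  have hs : 0 < t / (max A 1 * max B 1) := div_pos ht hpos
  have key := setOf_lt_mul_subset ha0 hb0 hA' hB' hs.le
  rw [mul_div_cancel₀ _ hpos.ne'] at key
  exact ((finite_setOf_lt ha (by positivity)).prod (finite_setOf_lt hb (by positivity))).subset key

end Products

section Sequences

variable {β γ : ℕ → ℂ}

lemma tendsto_norm_cofinite (hβ : β ∈ c0) : Tendsto (fun i => ‖β i‖) cofinite (𝓝 0) := by
  rw [Nat.cofinite_eq_atTop]
  simpa using (hβ : Tendsto β atTop (𝓝 0)).norm

lemma rearr_eq_decRearr (hβ : β ∈ c0) (n : ℕ) : rearr β n = decRearr (fun i => ‖β i‖) n := by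
  have h := sSup_sum_card_eq (fun i => norm_nonneg (β i)) (tendsto_norm_cofinite hβ)
  rw [rearr, rearrSum, rearrSum, h, h, Finset.sum_range_succ, add_sub_cancel_left]

lemma tendsto_norm_mul_norm (hβ : β ∈ c0) (hγ : γ ∈ c0) :
    Tendsto (fun p : ℕ × ℕ => ‖β p.1‖ * ‖γ p.2‖) cofinite (𝓝 0) :=
  tendsto_cofinite_mul (fun _ => norm_nonneg _) (fun _ => norm_nonneg _)
    (tendsto_norm_cofinite hβ) (tendsto_norm_cofinite hγ)

lemma tensorSeq_eq_decRearr (hβ : β ∈ c0) (hγ : γ ∈ c0) :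
    tensorSeq β γ = decRearr (fun p : ℕ × ℕ => ‖β p.1‖ * ‖γ p.2‖) := by
  ext n
  have h := sSup_sum_card_eq (fun p => mul_nonneg (norm_nonneg _) (norm_nonneg _))
    (tendsto_norm_mul_norm hβ hγ)
  rw [tensorSeq, tensorSum, tensorSum, h, h, Finset.sum_range_succ, add_sub_cancel_left]

lemma rearr_le_rearr_iff (hβ : β ∈ c0) (hγ : γ ∈ c0) :
    (∀ n, rearr β n ≤ rearr γ n) ↔
      ∀ t > 0, countGt (fun i => ‖β i‖) t ≤ countGt (fun i => ‖γ i‖) t := by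
  simp only [rearr_eq_decRearr hβ, rearr_eq_decRearr hγ]
  exact decRearr_le_decRearr_iff (fun _ => norm_nonneg _) (tendsto_norm_cofinite hβ)
    (fun _ => norm_nonneg _) (tendsto_norm_cofinite hγ)

lemma toC_mem_c0 {g : ℕ → ℝ} (hg : Tendsto g atTop (𝓝 0)) : toC g ∈ c0 := by
  have h := (Complex.continuous_ofReal.tendsto 0).comp hg
  rwa [Complex.ofReal_zero] at h

lemma add_mem_c0 (hβ : β ∈ c0) (hγ : γ ∈ c0) : β + γ ∈ c0 := by
  have h := (hβ : Tendsto β atTop (𝓝 0)).add hγ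
  rwa [add_zero] at h

lemma smul_mem_c0 (hβ : β ∈ c0) (e : ℂ) : e • β ∈ c0 := by
  have h := (hβ : Tendsto β atTop (𝓝 0)).const_smul e
  rwa [smul_zero] at h

lemma norm_toC {g : ℕ → ℝ} (hg : ∀ n, 0 ≤ g n) : (fun n => ‖toC g n‖) = g :=
  funext fun n => by rw [toC, Complex.norm_real, Real.norm_of_nonneg (hg n)]

lemma countGt_const_mul {ι : Type*} {f : ι → ℝ} {c : ℝ} (hc : 0 < c) (t : ℝ) :
    countGt (fun i => c * f i) t = countGt f (t / c) := by
  simp only [countGt, div_lt_iff₀' hc]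

end Sequences

section CalkinSpaces

variable {K : Set (ℕ → ℂ)} {x y : ℕ → ℂ}

lemma IsCalkinSpace.mem_of_countGt_le (hK : IsCalkinSpace K) (hx : x ∈ K) (hy : y ∈ c0)
    (h : ∀ t > 0, countGt (fun i => ‖y i‖) t ≤ countGt (fun i => ‖x i‖) t) : y ∈ K :=
  hK.2.2.2.2 x hx y hy ((rearr_le_rearr_iff hy (hK.1 hx)).mpr h)

lemma IsCalkinSpace.sum_mem_s4 {ι : Type*} (hK : IsCalkinSpace K) {s : Finset ι}
    {z : ι → ℕ → ℂ} (h : ∀ i ∈ s, z i ∈ K) : ∑ i ∈ s, z i ∈ K := by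
  classical
  induction s using Finset.induction_on with
  | empty => exact hK.2.1
  | insert i s hi ih =>
    rw [Finset.sum_insert hi]
    exact hK.2.2.1 _ (h i (s.mem_insert_self i)) _
      (ih fun j hj => h j (Finset.mem_insert_of_mem hj))

lemma IsCalkinSpace.toC_const_mul_mem (hK : IsCalkinSpace K) {g : ℕ → ℝ} (hg : toC g ∈ K)
    (c : ℝ) : toC (fun n => c * g n) ∈ K := by
  have : toC (fun n => c * g n) = (c : ℂ) • toC g := funext fun n => by simp [toC]
  exact this ▸ hK.2.2.2.1 _ _ hg

lemma principalCalkin_subset (hK : IsCalkinSpace K) (hx : x ∈ K) : principalCalkin x ⊆ K :=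
  Set.sInter_subset_of_mem ⟨hK, hx⟩

lemma mem_principalCalkin (x : ℕ → ℂ) : x ∈ principalCalkin x :=
  Set.mem_sInter.mpr fun _ hK => hK.2

/-- The row of `x ⊗ x` through a largest entry `|x i₀|` is `|x i₀| • |x|`. -/
lemma IsCalkinSpace.mem_of_tensorSeq_self_mem (hK : IsCalkinSpace K) (hx : x ∈ c0)
    (h : toC (tensorSeq x x) ∈ K) : x ∈ K := by
  set i₀ := nextMax (fun i => ‖x i‖) ∅
  have hmax : ∀ j, ‖x j‖ ≤ ‖x i₀‖ := fun j =>
    (nextMax_spec (fun i => norm_nonneg (x i)) (tendsto_norm_cofinite hx) ∅).2 j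
      (Finset.notMem_empty j)
  rcases (norm_nonneg (x i₀)).eq_or_lt with ha | ha
  · have : x = 0 := funext fun j => norm_le_zero_iff.mp (ha ▸ hmax j)
    exact this ▸ hK.2.1
  have hg0 : ∀ n, 0 ≤ ‖x i₀‖⁻¹ * tensorSeq x x n := fun n => by
    rw [tensorSeq_eq_decRearr hx hx]
    exact mul_nonneg (inv_nonneg.mpr ha.le) (decRearr_nonneg (fun _ => by positivity) n)
  refine hK.mem_of_countGt_le (hK.toC_const_mul_mem h ‖x i₀‖⁻¹) hx fun t ht => ?_
  rw [norm_toC hg0, countGt_const_mul (inv_pos.mpr ha), tensorSeq_eq_decRearr hx hx,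
    countGt_decRearr (fun _ => by positivity) (tendsto_norm_mul_norm hx hx) (by positivity),
    div_inv_eq_mul]
  refine Set.ncard_le_ncard_of_injOn (fun j => (i₀, j)) (fun j hj => ?_)
    (fun _ _ _ _ h => (Prod.ext_iff.mp h).2)
    (finite_setOf_lt (tendsto_norm_mul_norm hx hx) (by positivity))
  exact (mul_lt_mul_of_pos_right hj ha).trans_eq (mul_comm _ _)

end CalkinSpaces

section Dilations

variable {α : ℕ → ℝ} {k : ℕ}

lemma tendsto_dilate (hα : Tendsto α atTop (𝓝 0)) (hk : 0 < k) :
    Tendsto (fun n => α (n / k)) atTop (𝓝 0) :=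
  hα.comp (Nat.tendsto_div_const_atTop hk.ne')

lemma mul_countGt_le_countGt_dilate (hα : Tendsto α atTop (𝓝 0)) (hk : 0 < k) {t : ℝ}
    (ht : 0 < t) : k * countGt α t ≤ countGt (fun n => α (n / k)) t := by
  calc k * countGt α t = ({j | t < α j} ×ˢ Set.Iio k).ncard := by
        rw [Set.ncard_prod, Set.ncard_Iio_nat, mul_comm]; rfl
    _ ≤ countGt (fun n => α (n / k)) t := by
      refine Set.ncard_le_ncard_of_injOn (fun p => k * p.1 + p.2) (fun p hp => ?_) ?_
        (finite_setOf_lt (Nat.cofinite_eq_atTop ▸ tendsto_dilate hα hk) ht)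
      · simpa [Nat.mul_add_div hk, Nat.div_eq_of_lt hp.2] using hp.1
      · rintro ⟨j, i⟩ ⟨-, hi⟩ ⟨j', i'⟩ ⟨-, hi'⟩ h
        have hj : j = j' := by
          simpa [Nat.mul_add_div hk, Nat.div_eq_of_lt hi, Nat.div_eq_of_lt hi'] using
            congrArg (· / k) h
        subst hj
        simp_all

lemma countGt_ite_mod_le (hα : Tendsto α atTop (𝓝 0)) {t : ℝ} (ht : 0 < t) (i : ℕ) :
    countGt (fun n => if n % k = i then α (n / k) else 0) t ≤ countGt α t := by
  have hmod : ∀ n, t < (if n % k = i then α (n / k) else 0) → n % k = i ∧ t < α (n / k) :=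
    fun n hn => by
      split_ifs at hn with h
      · exact ⟨h, hn⟩
      · exact absurd hn ht.not_gt
  refine Set.ncard_le_ncard_of_injOn (· / k) (fun n hn => (hmod n hn).2) (fun n hn n' hn' h => ?_)
    (finite_setOf_lt (Nat.cofinite_eq_atTop ▸ hα) ht)
  rw [← Nat.div_add_mod n k, ← Nat.div_add_mod n' k, (hmod n hn).1, (hmod n' hn').1]
  exact congrArg (k * · + i) h

/-- `α(n / k)` is the sum of `k` interleaved copies of `α`, each dominated by `α`. -/
lemma IsCalkinSpace.toC_dilate_mem {K : Set (ℕ → ℂ)} (hK : IsCalkinSpace K) (hαK : toC α ∈ K)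
    (hα0 : ∀ n, 0 ≤ α n) (hα : Tendsto α atTop (𝓝 0)) (hk : 0 < k) :
    toC (fun n => α (n / k)) ∈ K := by
  set copy : ℕ → ℕ → ℝ := fun i n => if n % k = i then α (n / k) else 0
  have hcopy0 : ∀ i n, 0 ≤ copy i n := fun i n => by
    simp only [copy]; split_ifs <;> simp [hα0]
  have hcopy_le : ∀ i n, copy i n ≤ α (n / k) := fun i n => by
    simp only [copy]; split_ifs <;> simp [hα0]
  have hcopy_mem : ∀ i, toC (copy i) ∈ K := fun i =>
    hK.mem_of_countGt_le hαK
      (toC_mem_c0 (squeeze_zero (hcopy0 i) (hcopy_le i) (tendsto_dilate hα hk))) fun t ht => by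
        rw [norm_toC (hcopy0 i), norm_toC hα0]
        exact countGt_ite_mod_le hα ht i
  have hsum : toC (fun n => α (n / k)) = ∑ i ∈ Finset.range k, toC (copy i) := by
    ext n
    simp [toC, copy, Finset.sum_apply, apply_ite Complex.ofReal, Nat.mod_lt n hk]
  exact hsum ▸ hK.sum_mem_s4 fun i _ => hcopy_mem i

end Dilations

section DilationBounded

/-- The sequences whose decreasing rearrangement is `O(α(n / k))` for some `k`, expressed through
distribution functions. -/
def dilationBounded (α : ℕ → ℝ) : Set (ℕ → ℂ) :=
  {β | β ∈ c0 ∧ ∃ c > 0, ∃ k : ℕ, 0 < k ∧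
    ∀ t > 0, countGt (fun i => ‖β i‖) (c * t) ≤ k * countGt α t}

variable {α : ℕ → ℝ} {x y : ℕ → ℂ}

lemma countGt_norm_add_le (hx : x ∈ c0) (hy : y ∈ c0) {s t : ℝ} (hs : 0 < s) (ht : 0 < t) :
    countGt (fun i => ‖(x + y) i‖) (s + t) ≤
      countGt (fun i => ‖x i‖) s + countGt (fun i => ‖y i‖) t := by
  have hsub : {i | s + t < ‖(x + y) i‖} ⊆ {i | s < ‖x i‖} ∪ {i | t < ‖y i‖} := fun i hi => by
    by_contra! h
    simp only [Set.mem_union, Set.mem_ofPred_eq, not_or, not_lt, Pi.add_apply] at h hi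
    linarith [norm_add_le (x i) (y i)]
  exact (Set.ncard_le_ncard hsub ((finite_setOf_lt (tendsto_norm_cofinite hx) hs).union
    (finite_setOf_lt (tendsto_norm_cofinite hy) ht))).trans (Set.ncard_union_le _ _)

lemma countGt_norm_smul_le (hx : x ∈ c0) (e : ℂ) {s : ℝ} (hs : 0 < s) :
    countGt (fun i => ‖(e • x) i‖) ((‖e‖ + 1) * s) ≤ countGt (fun i => ‖x i‖) s := by
  refine Set.ncard_le_ncard (fun i hi => ?_) (finite_setOf_lt (tendsto_norm_cofinite hx) hs)
  by_contra! h
  simp only [Set.mem_ofPred_eq, Pi.smul_apply, smul_eq_mul, norm_mul, not_lt] at h hi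
  nlinarith [mul_le_mul_of_nonneg_left h (norm_nonneg e)]

lemma isCalkinSpace_dilationBounded (α : ℕ → ℝ) : IsCalkinSpace (dilationBounded α) := by
  refine ⟨fun β hβ => hβ.1, ⟨tendsto_const_nhds, 1, one_pos, 1, one_pos, fun t ht => ?_⟩,
    ?_, ?_, ?_⟩
  · simp [countGt, ht.not_gt]
  · rintro x ⟨hx, c, hc, k, hk, hxk⟩ y ⟨hy, c', hc', k', hk', hyk⟩
    refine ⟨add_mem_c0 hx hy, c + c', by positivity, k + k', by positivity,
      fun t ht => ?_⟩
    calc countGt (fun i => ‖(x + y) i‖) ((c + c') * t)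
        ≤ countGt (fun i => ‖x i‖) (c * t) + countGt (fun i => ‖y i‖) (c' * t) := by
          rw [add_mul]; exact countGt_norm_add_le hx hy (by positivity) (by positivity)
      _ ≤ k * countGt α t + k' * countGt α t := add_le_add (hxk t ht) (hyk t ht)
      _ = (k + k') * countGt α t := (add_mul _ _ _).symm
  · rintro e x ⟨hx, c, hc, k, hk, hxk⟩
    refine ⟨smul_mem_c0 hx e, (‖e‖ + 1) * c, by positivity, k, hk,
      fun t ht => ?_⟩
    rw [mul_assoc]
    exact (countGt_norm_smul_le hx e (by positivity)).trans (hxk t ht)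
  · rintro x ⟨hx, c, hc, k, hk, hxk⟩ y hy hyx
    exact ⟨hy, c, hc, k, hk, fun t ht =>
      ((rearr_le_rearr_iff hy hx).mp hyx _ (by positivity)).trans (hxk t ht)⟩

lemma dilationBounded_subset {K : Set (ℕ → ℂ)} (hK : IsCalkinSpace K) (hαK : toC α ∈ K)
    (hα0 : ∀ n, 0 ≤ α n) (hα : Tendsto α atTop (𝓝 0)) : dilationBounded α ⊆ K := by
  rintro β ⟨hβ, c, hc, k, hk, hβk⟩
  have hnonneg : ∀ n, 0 ≤ c * α (n / k) := fun n => mul_nonneg hc.le (hα0 _)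
  refine hK.mem_of_countGt_le (hK.toC_const_mul_mem (hK.toC_dilate_mem hαK hα0 hα hk) c) hβ
    fun t ht => ?_
  have htc : 0 < t / c := div_pos ht hc
  calc countGt (fun i => ‖β i‖) t = countGt (fun i => ‖β i‖) (c * (t / c)) := by
        rw [mul_div_cancel₀ _ hc.ne']
    _ ≤ k * countGt α (t / c) := hβk _ htc
    _ ≤ countGt (fun n => α (n / k)) (t / c) := mul_countGt_le_countGt_dilate hα hk htc
    _ = countGt (fun n => ‖toC (fun n => c * α (n / k)) n‖) t := by
        rw [norm_toC hnonneg, countGt_const_mul hc]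

lemma principalCalkin_eq_dilationBounded (hα0 : ∀ n, 0 ≤ α n) (hα : Tendsto α atTop (𝓝 0)) :
    principalCalkin (toC α) = dilationBounded α := by
  refine (principalCalkin_subset (isCalkinSpace_dilationBounded α)
    ⟨toC_mem_c0 hα, 1, one_pos, 1, one_pos, fun t _ => ?_⟩).antisymm
    (Set.subset_sInter fun K ⟨hK, hαK⟩ => dilationBounded_subset hK hαK hα0 hα)
  rw [norm_toC hα0, one_mul, one_mul]

end DilationBounded

section TensorProducts

variable {α : ℕ → ℝ}

lemma norm_le_of_countGt_le {β : ℕ → ℂ} (hβ : β ∈ c0) (hα1 : ∀ n, α n ≤ 1) {c : ℝ}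
    (hc : 0 < c) {k : ℕ} (hβk : ∀ t > 0, countGt (fun i => ‖β i‖) (c * t) ≤ k * countGt α t)
    (i : ℕ) : ‖β i‖ ≤ c := by
  have h := hβk 1 one_pos
  rw [countGt_eq_zero hα1, mul_zero, nonpos_iff_eq_zero, countGt,
    Set.ncard_eq_zero (finite_setOf_lt (tendsto_norm_cofinite hβ) (by positivity))] at h
  simpa using Set.eq_empty_iff_forall_notMem.mp h i

lemma tensorSeq_mem_dilationBounded {r : ℝ} (hr : 0 < r) {D : ℕ} (hD : 0 < D)
    (hα1 : ∀ n, α n ≤ 1) (hsq : ∀ t > 0, countGt α t ^ 2 ≤ D * countGt α (r * t))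
    {β γ : ℕ → ℂ} (hβ : β ∈ dilationBounded α) (hγ : γ ∈ dilationBounded α) :
    toC (tensorSeq β γ) ∈ dilationBounded α := by
  obtain ⟨hβ, c, hc, k, hk, hβk⟩ := hβ
  obtain ⟨hγ, c', hc', k', hk', hγk⟩ := hγ
  have h0 : ∀ p : ℕ × ℕ, 0 ≤ ‖β p.1‖ * ‖γ p.2‖ := fun p => by positivity
  have hrearr := tensorSeq_eq_decRearr hβ hγ
  refine ⟨hrearr ▸ toC_mem_c0 (tendsto_decRearr h0 (tendsto_norm_mul_norm hβ hγ)),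
    c * c' / r, by positivity, k * k' * D, by positivity, fun t ht => ?_⟩
  have hs : 0 < t / r := div_pos ht hr
  rw [hrearr, norm_toC (decRearr_nonneg h0), countGt_decRearr h0 (tendsto_norm_mul_norm hβ hγ)
    (by positivity)]
  calc countGt (fun p : ℕ × ℕ => ‖β p.1‖ * ‖γ p.2‖) (c * c' / r * t)
      = countGt (fun p : ℕ × ℕ => ‖β p.1‖ * ‖γ p.2‖) (c * c' * (t / r)) := by ring_nf
    _ ≤ countGt (fun i => ‖β i‖) (c * (t / r)) * countGt (fun j => ‖γ j‖) (c' * (t / r)) :=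
        countGt_mul_le (fun _ => norm_nonneg _) (fun _ => norm_nonneg _)
          (norm_le_of_countGt_le hβ hα1 hc hβk) (norm_le_of_countGt_le hγ hα1 hc' hγk) hs.le
          (finite_setOf_lt (tendsto_norm_cofinite hβ) (by positivity))
          (finite_setOf_lt (tendsto_norm_cofinite hγ) (by positivity))
    _ ≤ (k * countGt α (t / r)) * (k' * countGt α (t / r)) :=
        Nat.mul_le_mul (hβk _ hs) (hγk _ hs)
    _ = k * k' * countGt α (t / r) ^ 2 := by ring
    _ ≤ k * k' * (D * countGt α (r * (t / r))) := Nat.mul_le_mul_left _ (hsq _ hs)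
    _ = k * k' * D * countGt α t := by rw [mul_div_cancel₀ _ hr.ne']; ring

end TensorProducts

section Growth

variable {ω : ℝ} {α : ℕ → ℝ}

lemma countGt_pow_succ_eq_Ktil (hω0 : 0 < ω) (hω1 : ω ≤ 1) (hα : Tendsto α atTop (𝓝 0))
    (hα1 : ∀ n, α n ≤ 1) (n : ℕ) : countGt α (ω ^ (n + 1)) = Ktil ω α n := by
  have hstep : ∀ i, countGt α (ω ^ (i + 1)) = countGt α (ω ^ i) + Kw ω α i := fun i => by
    have hle : ω ^ (i + 1) ≤ ω ^ i := pow_le_pow_of_le_one hω0.le hω1 i.le_succ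
    have hunion : {m | ω ^ (i + 1) < α m} =
        {m | ω ^ i < α m} ∪ {m | ω ^ (i + 1) < α m ∧ α m ≤ ω ^ i} := by
      ext m
      simp only [Set.mem_ofPred_eq, Set.mem_union]
      constructor
      · intro h; by_cases h' : α m ≤ ω ^ i <;> simp_all
      · rintro (h | h)
        · linarith
        · exact h.1
    have hdisj : Disjoint {m | ω ^ i < α m} {m | ω ^ (i + 1) < α m ∧ α m ≤ ω ^ i} :=
      Set.disjoint_left.mpr fun m h h' => h'.2.not_gt h
    have hfin := finite_setOf_lt (Nat.cofinite_eq_atTop ▸ hα) (pow_pos hω0 (i + 1))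
    rw [countGt, hunion, Set.ncard_union_eq hdisj
      (hfin.subset fun m (h : ω ^ i < α m) => hle.trans_lt h) (hfin.subset fun m h => h.1)]
    rfl
  induction n with
  | zero =>
    rw [hstep, pow_zero, countGt_eq_zero hα1, zero_add, Ktil, Finset.sum_range_one]
  | succ n ih => rw [hstep, ih, Ktil, Ktil, Finset.sum_range_succ _ (n + 1)]

lemma Ktil_sq_le_of_growth {C : ℝ} (hC : 0 < C)
    (hgrowth : ∀ n, C * (Ktil ω α n : ℝ) ^ 2 ≤ Kw ω α (n + 1)) (n : ℕ) :
    Ktil ω α n ^ 2 ≤ ⌈C⁻¹⌉₊ * Ktil ω α (n + 1) := by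
  have hKw : Kw ω α (n + 1) ≤ Ktil ω α (n + 1) := by
    rw [Ktil, Finset.sum_range_succ]
    exact Nat.le_add_left _ _
  have : (Ktil ω α n : ℝ) ^ 2 ≤ ⌈C⁻¹⌉₊ * Ktil ω α (n + 1) :=
    calc (Ktil ω α n : ℝ) ^ 2 ≤ C⁻¹ * Kw ω α (n + 1) := by
          rw [inv_mul_eq_div, le_div_iff₀' hC]
          exact hgrowth n
      _ ≤ ⌈C⁻¹⌉₊ * Ktil ω α (n + 1) :=
          mul_le_mul (Nat.le_ceil _) (by exact_mod_cast hKw) (by positivity) (by positivity)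
  exact_mod_cast this

/-- Compare `t ∈ (0, 1]` with the level `ω ^ (n + 1) < t ≤ ω ^ n` containing it. -/
lemma countGt_sq_le (hω0 : 0 < ω) (hω1 : ω < 1) (hα : Tendsto α atTop (𝓝 0))
    (hα1 : ∀ n, α n ≤ 1) {D : ℕ} (hD : ∀ n, Ktil ω α n ^ 2 ≤ D * Ktil ω α (n + 1)) {t : ℝ}
    (ht : 0 < t) : countGt α t ^ 2 ≤ D * countGt α (ω ^ 2 * t) := by
  rcases le_or_gt t 1 with ht1 | ht1
  · obtain ⟨n, hlt, hle⟩ := exists_nat_pow_near_of_lt_one ht ht1 hω0 hω1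
    have hα' : Tendsto α cofinite (𝓝 0) := Nat.cofinite_eq_atTop ▸ hα
    have hlevel : ω ^ 2 * t ≤ ω ^ (n + 1 + 1) :=
      calc ω ^ 2 * t ≤ ω ^ 2 * ω ^ n := mul_le_mul_of_nonneg_left hle (by positivity)
        _ = ω ^ (n + 1 + 1) := by ring
    calc countGt α t ^ 2 ≤ countGt α (ω ^ (n + 1)) ^ 2 :=
          Nat.pow_le_pow_left (countGt_anti hα' (by positivity) hlt.le) 2
      _ ≤ D * countGt α (ω ^ (n + 1 + 1)) := by
          rw [countGt_pow_succ_eq_Ktil hω0 hω1.le hα hα1,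
            countGt_pow_succ_eq_Ktil hω0 hω1.le hα hα1]
          exact hD n
      _ ≤ D * countGt α (ω ^ 2 * t) :=
          Nat.mul_le_mul_left _ (countGt_anti hα' (by positivity) hlevel)
  · rw [countGt_eq_zero fun i => (hα1 i).trans ht1.le]
    simp

end Growth

/-- Let `α` be a nonincreasing null sequence of nonnegative reals with
`α₁ ≤ 1` and `ω ∈ (0,1)`.  If there is `C > 0` with
`K_{n+j}^{(ω)}(α) ≥ C (Σ_{i=0}^n K_i^{(ω)}(α))²` for every `j ≥ 1` and `n ≥ 0`, then the
principal Calkin space `⟨α⟩` is stable. -/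
theorem principal_stable_of_Kw_growth (ω : ℝ) (hω : ω ∈ Set.Ioo (0 : ℝ) 1) (α : ℕ → ℝ)
    (hαa : Antitone α) (hα0 : ∀ n, 0 ≤ α n)
    (hαc : Filter.Tendsto α Filter.atTop (nhds 0)) (hα1 : α 0 ≤ 1)
    (C : ℝ) (hC : 0 < C)
    (hgrowth : ∀ j : ℕ, 0 < j → ∀ n : ℕ,
      C * ((Ktil ω α n : ℝ)) ^ 2 ≤ (Kw ω α (n + j) : ℝ)) :
    IsStableCalkin (principalCalkin (toC α)) := by
  obtain ⟨hω0, hω1⟩ := hω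
  have hle1 : ∀ n, α n ≤ 1 := fun n => (hαa n.zero_le).trans hα1
  have hsq : ∀ t > 0, countGt α t ^ 2 ≤ ⌈C⁻¹⌉₊ * countGt α (ω ^ 2 * t) := fun t ht =>
    countGt_sq_le hω0 hω1 hαc hle1 (Ktil_sq_le_of_growth hC (hgrowth 1 one_pos)) ht
  have hI := principalCalkin_eq_dilationBounded hα0 hαc
  have hIc : IsCalkinSpace (principalCalkin (toC α)) := hI ▸ isCalkinSpace_dilationBounded α
  refine ⟨hIc, subset_antisymm ?_ ?_⟩
  · refine Set.sInter_subset_of_mem ⟨hIc, fun β hβ γ hγ => ?_⟩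
    rw [hI] at hβ hγ ⊢
    exact tensorSeq_mem_dilationBounded (by positivity) (Nat.ceil_pos.mpr (by positivity)) hle1
      hsq hβ hγ
  · exact Set.subset_sInter fun K ⟨hK, hKt⟩ => principalCalkin_subset hK
      (hK.mem_of_tensorSeq_self_mem (toC_mem_c0 hαc)
        (hKt _ (mem_principalCalkin _) _ (mem_principalCalkin _)))
end
end
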